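/- arXiv:2012.03210 — 3 statements merged into one kernel-verified Lean document; each statement's English description precedes it below -/
import Mathlib

section
/- Fix a sufficiently small ε > 0 and α ∈ (0,1/2) with |α·ln α + (1−α)·ln(1−α)| < ε, and set t₂ = ⌊(1/ln 2 + 3ε)·ln ln n⌋. Fix a set Y ⊆ [n] of size y ≥ (ln n)^{2+3ε}·√n. For n large enough, the probability that in G(n,1/2) the number of vertices v ∈ [n]∖Y with |N₀(v,Y)| ≤ α·y exceeds t₂ is at most e^{−(1+ε/2)·y·ln ln n}. -/
open MeasureTheory Filter Real
open scoped Classical ENNReal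

noncomputable section

instance (n : ℕ) : MeasurableSpace (SimpleGraph (Fin n)) := ⊤

/-- The number of edges of a graph on `Fin n`. -/
noncomputable def edgeCount {n : ℕ} (G : SimpleGraph (Fin n)) : ℕ := Nat.card G.edgeSet

/-- The binomial random graph measure `G(n,p)`: a graph with `e` edges receives
probability `p ^ e * (1 - p) ^ (C(n,2) - e)`. -/
noncomputable def gnp (n : ℕ) (p : ℝ) : Measure (SimpleGraph (Fin n)) :=
  ∑ G : SimpleGraph (Fin n),
    (ENNReal.ofReal (p ^ edgeCount G * (1 - p) ^ (n.choose 2 - edgeCount G))) •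
      MeasureTheory.Measure.dirac G

/-- `K` is an inclusion-maximal clique of `G`. -/
def IsMaxClique {n : ℕ} (G : SimpleGraph (Fin n)) (K : Finset (Fin n)) : Prop :=
  G.IsClique (K : Set (Fin n)) ∧
    ∀ K' : Finset (Fin n), G.IsClique (K' : Set (Fin n)) → K ⊆ K' → K' = K

/-- A clique coloring: no inclusion-maximal clique with at least two vertices is
monochromatic. -/
def IsCliqueColoring {n : ℕ} {α : Type*} (G : SimpleGraph (Fin n)) (c : Fin n → α) : Prop :=
  ∀ K : Finset (Fin n), IsMaxClique G K → 2 ≤ K.card → ¬ ∀ u ∈ K, ∀ w ∈ K, c u = c w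

/-- The clique chromatic number. -/
noncomputable def cliqueChromaticNumber {n : ℕ} (G : SimpleGraph (Fin n)) : ℕ :=
  sInf {s : ℕ | ∃ c : Fin n → Fin s, IsCliqueColoring G c}

/-- `N₀(v, Y)`: the set of non-neighbors of `v` inside `Y`. -/
noncomputable def nonNbrs {n : ℕ} (G : SimpleGraph (Fin n)) (v : Fin n) (Y : Finset (Fin n)) :
    Finset (Fin n) :=
  Y.filter (fun u => u ≠ v ∧ ¬ G.Adj v u)

/-- `N₀(v₁, …, v_j)`: the set of common non-neighbors of `v₁, …, v_j`. -/
noncomputable def commonNonNbrs {n j : ℕ} (G : SimpleGraph (Fin n)) (v : Fin j → Fin n) :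
    Finset (Fin n) :=
  Finset.univ.filter (fun u => ∀ i, u ≠ v i ∧ ¬ G.Adj (v i) u)


/-!
Union bound over the sets `T` of `t₂ + 1` vertices outside `Y`. For a fixed `T` the `|T| y` pairs
between `T` and `Y` are independent fair coins, so every `v ∈ T` has at most `α y` non-neighbours
in `Y` with probability `(2^{-y} ∑_{k ≤ α y} C(y,k))^{|T|} ≤ (2^{-y} e^{y H(α)})^{|T|}`, where
`H(α) = |α ln α + (1-α) ln(1-α)| < ε` is the binary entropy. The total is at most
`exp(-(t₂+1)(y(ln 2 - ε) - ln n))`; since `y ≥ √n ≫ ln n / ε` and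
`(1/ln 2 + 3ε)(ln 2 - ε) > 1 + ε/2`, the exponent is below `-(1 + ε/2) y ln ln n`.
-/

open Finset

lemma edgeCount_le_choose_two {n : ℕ} (G : SimpleGraph (Fin n)) : edgeCount G ≤ n.choose 2 := by
  rw [edgeCount, Nat.card_eq_fintype_card, ← SimpleGraph.edgeFinset_card]
  simpa using G.card_edgeFinset_le_card_choose_two

lemma gnp_half_apply {n : ℕ} (S : Set (SimpleGraph (Fin n))) :
    gnp n (1/2) S = ENNReal.ofReal (#(univ.filter (· ∈ S)) / 2 ^ n.choose 2) := by
  have weight (G : SimpleGraph (Fin n)) :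
      (1/2 : ℝ) ^ edgeCount G * (1 - 1/2) ^ (n.choose 2 - edgeCount G) = (1/2) ^ n.choose 2 := by
    rw [show (1 - 1/2 : ℝ) = 1/2 by norm_num, ← pow_add,
      Nat.add_sub_cancel' (edgeCount_le_choose_two G)]
  simp only [gnp, Measure.finsetSum_apply, Measure.smul_apply, weight, smul_eq_mul,
    Measure.dirac_apply' _ MeasurableSpace.measurableSet_top, Set.indicator_apply,
    Pi.one_apply, mul_ite, mul_one, mul_zero, sum_ite, sum_const_zero, add_zero, sum_const,
    nsmul_eq_mul]
  rw [← ENNReal.ofReal_natCast, ← ENNReal.ofReal_mul (by positivity), one_div, inv_pow,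
    div_eq_mul_inv]

lemma sum_range_choose_le_exp_binEntropy {y m : ℕ} {α : ℝ} (hα₀ : 0 < α) (hα : α ≤ 1/2)
    (hm : m ≤ α * y) :
    ∑ k ∈ range (m + 1), (y.choose k : ℝ) ≤ Real.exp (y * Real.binEntropy α) := by
  have hα₁ : 0 < 1 - α := by linarith
  have hmy : m ≤ y := by
    have : (m : ℝ) ≤ y := hm.trans (by nlinarith [(y.cast_nonneg : (0:ℝ) ≤ y)])
    exact_mod_cast this
  have term_ge (k : ℕ) (hk : k ≤ m) :
      Real.exp (-(y * Real.binEntropy α)) ≤ α ^ k * (1 - α) ^ (y - k) := by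
    rw [← Real.exp_log (pow_pos hα₀ k), ← Real.exp_log (pow_pos hα₁ _), ← Real.exp_add,
      Real.log_pow, Real.log_pow, Nat.cast_sub (hk.trans hmy), Real.exp_le_exp,
      Real.binEntropy, Real.log_inv, Real.log_inv]
    have hk' : (k : ℝ) ≤ α * y := (Nat.cast_le.mpr hk).trans hm
    have hlog : Real.log α ≤ Real.log (1 - α) := Real.log_le_log hα₀ (by linarith)
    nlinarith [mul_le_mul_of_nonneg_left hlog (sub_nonneg.mpr hk')]
  have total : ∑ k ∈ range (y + 1), α ^ k * (1 - α) ^ (y - k) * y.choose k = 1 := by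
    rw [← add_pow]; norm_num
  have hsum :
      (∑ k ∈ range (m + 1), (y.choose k : ℝ)) * Real.exp (-(y * Real.binEntropy α)) ≤ 1 := by
    rw [← total, sum_mul]
    refine (sum_le_sum fun k hk => ?_).trans (sum_le_sum_of_subset_of_nonneg
      (range_subset_range.mpr (by omega)) fun k _ _ => by positivity)
    rw [mul_comm]
    exact mul_le_mul_of_nonneg_right (term_ge k (Nat.lt_succ_iff.mp (mem_range.mp hk)))
      (by positivity)
  rwa [Real.exp_neg, ← div_eq_mul_inv, div_le_one (Real.exp_pos _)] at hsum

lemma Real.binEntropy_eq_abs {p : ℝ} (hp₀ : 0 ≤ p) (hp₁ : p ≤ 1) :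
    Real.binEntropy p = |p * Real.log p + (1 - p) * Real.log (1 - p)| := by
  have h := Real.binEntropy_nonneg hp₀ hp₁
  rw [Real.binEntropy, Real.log_inv, Real.log_inv] at h ⊢
  rw [abs_of_nonpos (by linarith)]
  ring

lemma card_filter_powerset_card_le {α : Type*} (s : Finset α) (m : ℕ) :
    #(s.powerset.filter fun A => #A ≤ m) = ∑ k ∈ range (m + 1), (#s).choose k := by
  rw [card_eq_sum_card_fiberwise (f := card) (t := range (m + 1))
    fun A hA => mem_range.mpr (Nat.lt_succ_of_le (mem_filter.mp hA).2)]
  refine sum_congr rfl fun k hk => ?_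
  rw [← card_powersetCard, powersetCard_eq_filter, filter_filter]
  congr 1
  refine filter_congr fun A _ => ?_
  exact ⟨And.right, fun h => ⟨h ▸ Nat.lt_succ_iff.mp (mem_range.mp hk), h⟩⟩

def between {V : Type*} (T Y : Finset V) : SimpleGraph V :=
  SimpleGraph.fromRel fun a b => a ∈ T ∧ b ∈ Y

lemma edgeFinset_between {V : Type*} [Fintype V] [DecidableEq V] (T Y : Finset V)
    (hTY : Disjoint T Y) :
    (between T Y).edgeFinset = (T ×ˢ Y).image (fun p => s(p.1, p.2)) := by
  ext e
  induction e using Sym2.ind with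
  | h a b =>
    rw [SimpleGraph.mem_edgeFinset, SimpleGraph.mem_edgeSet, between, SimpleGraph.fromRel_adj]
    simp only [mem_image, mem_product, Prod.exists, Sym2.eq_iff]
    constructor
    · rintro ⟨-, ⟨ha, hb⟩ | ⟨hb, ha⟩⟩
      · exact ⟨a, b, ⟨ha, hb⟩, .inl ⟨rfl, rfl⟩⟩
      · exact ⟨b, a, ⟨hb, ha⟩, .inr ⟨rfl, rfl⟩⟩
    · rintro ⟨c, d, ⟨hc, hd⟩, ⟨rfl, rfl⟩ | ⟨rfl, rfl⟩⟩
      · exact ⟨fun h => disjoint_left.mp hTY hc (h ▸ hd), .inl ⟨hc, hd⟩⟩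
      · exact ⟨fun h => disjoint_left.mp hTY hc (h ▸ hd), .inr ⟨hc, hd⟩⟩

lemma card_edgeFinset_between {V : Type*} [Fintype V] [DecidableEq V] (T Y : Finset V)
    (hTY : Disjoint T Y) :
    #(between T Y).edgeFinset = #T * #Y := by
  rw [edgeFinset_between T Y hTY, card_image_of_injOn, card_product]
  rintro ⟨a, b⟩ hab ⟨c, d⟩ hcd h
  simp only [coe_product, Set.mem_prod, mem_coe] at hab hcd
  rcases Sym2.eq_iff.mp h with ⟨rfl, rfl⟩ | ⟨rfl, rfl⟩
  · rfl
  · exact absurd hcd.2 (disjoint_left.mp hTY hab.1)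

lemma card_edgeFinset_top_sdiff_between_add {V : Type*} [Fintype V] [DecidableEq V]
    (T Y : Finset V) (hTY : Disjoint T Y) :
    #(⊤ \ between T Y).edgeFinset + #T * #Y = (Fintype.card V).choose 2 := by
  have hsub := SimpleGraph.edgeFinset_mono (le_top : between T Y ≤ ⊤)
  rw [SimpleGraph.edgeFinset_sdiff, card_sdiff_of_subset hsub, ← card_edgeFinset_between T Y hTY,
    Nat.sub_add_cancel (card_le_card hsub), SimpleGraph.card_edgeFinset_top_eq_card_choose_two]

lemma adj_iff_notMem_nonNbrs {n : ℕ} (G : SimpleGraph (Fin n)) {v u : Fin n}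
    {Y : Finset (Fin n)} (hv : v ∉ Y) (hu : u ∈ Y) : G.Adj v u ↔ u ∉ nonNbrs G v Y := by
  have huv : u ≠ v := fun h => hv (h ▸ hu)
  simp [nonNbrs, hu, huv]

lemma eq_of_nonNbrs_eq_of_sdiff_between_eq {n : ℕ} {G₁ G₂ : SimpleGraph (Fin n)}
    {T Y : Finset (Fin n)} (hTY : Disjoint T Y)
    (hN : ∀ v ∈ T, nonNbrs G₁ v Y = nonNbrs G₂ v Y)
    (hD : G₁ \ between T Y = G₂ \ between T Y) : G₁ = G₂ := by
  ext a b
  by_cases hab : (between T Y).Adj a b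
  · obtain ⟨-, ⟨ha, hb⟩ | ⟨hb, ha⟩⟩ := hab
    · rw [adj_iff_notMem_nonNbrs G₁ (disjoint_left.mp hTY ha) hb,
        adj_iff_notMem_nonNbrs G₂ (disjoint_left.mp hTY ha) hb, hN a ha]
    · rw [G₁.adj_comm, G₂.adj_comm, adj_iff_notMem_nonNbrs G₁ (disjoint_left.mp hTY hb) ha,
        adj_iff_notMem_nonNbrs G₂ (disjoint_left.mp hTY hb) ha, hN b hb]
  · have := congrArg (fun G : SimpleGraph (Fin n) => G.Adj a b) hD
    simpa [hab] using this

lemma card_forall_nonNbrs_le_mul_le {n : ℕ} {T Y : Finset (Fin n)} (hTY : Disjoint T Y) (m : ℕ) :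
    #(univ.filter fun G : SimpleGraph (Fin n) => ∀ v ∈ T, #(nonNbrs G v Y) ≤ m) * 2 ^ (#T * #Y)
      ≤ (∑ k ∈ range (m + 1), (#Y).choose k) ^ #T * 2 ^ n.choose 2 := by
  set good := univ.filter fun G : SimpleGraph (Fin n) => ∀ v ∈ T, #(nonNbrs G v Y) ≤ m
  set small := Y.powerset.filter fun A => #A ≤ m
  let code (G : SimpleGraph (Fin n)) : (Fin n → Finset (Fin n)) × Finset (Sym2 (Fin n)) :=
    (fun v => if v ∈ T then nonNbrs G v Y else ∅, (G \ between T Y).edgeFinset)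
  set codes := Fintype.piFinset (fun v => if v ∈ T then small else {∅}) ×ˢ
    (⊤ \ between T Y).edgeFinset.powerset
  have hcode : Set.MapsTo code good codes := by
    intro G hG
    simp only [good, coe_filter, mem_univ, true_and, Set.mem_ofPred_eq] at hG
    simp only [code, codes, mem_coe, mem_product, Fintype.mem_piFinset, mem_powerset]
    refine ⟨fun v => ?_, SimpleGraph.edgeFinset_mono (sdiff_le_sdiff_right le_top)⟩
    split_ifs with hv
    · exact mem_filter.mpr ⟨mem_powerset.mpr (filter_subset _ _), hG v hv⟩
    · exact mem_singleton_self _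
  have hinj : Set.InjOn code good := by
    intro G₁ _ G₂ _ h
    simp only [code, Prod.mk.injEq, SimpleGraph.edgeFinset_inj] at h
    refine eq_of_nonNbrs_eq_of_sdiff_between_eq hTY (fun v hv => ?_) h.2
    simpa [hv] using congrFun h.1 v
  have hcodes : #codes = #small ^ #T * 2 ^ #(⊤ \ between T Y).edgeFinset := by
    simp only [codes, card_product, Fintype.card_piFinset, card_powerset, apply_ite card,
      card_singleton, prod_ite_mem_eq, prod_const]
  calc _ ≤ #codes * 2 ^ (#T * #Y) :=
        Nat.mul_le_mul_right _ (card_le_card_of_injOn code hcode hinj)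
    _ = _ := by
        rw [hcodes, mul_assoc, ← pow_add, card_edgeFinset_top_sdiff_between_add T Y hTY,
          Fintype.card_fin, card_filter_powerset_card_le]

def fewNonNbrs {n : ℕ} (G : SimpleGraph (Fin n)) (Y : Finset (Fin n)) (m : ℕ) :
    Finset (Fin n) :=
  univ.filter fun v => v ∉ Y ∧ #(nonNbrs G v Y) ≤ m

lemma card_many_fewNonNbrs_mul_le {n : ℕ} (Y : Finset (Fin n)) (m t : ℕ) :
    #(univ.filter fun G : SimpleGraph (Fin n) => t ≤ #(fewNonNbrs G Y m)) * 2 ^ (t * #Y)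
      ≤ n.choose t * ((∑ k ∈ range (m + 1), (#Y).choose k) ^ t * 2 ^ n.choose 2) := by
  have hcover : (univ.filter fun G : SimpleGraph (Fin n) => t ≤ #(fewNonNbrs G Y m))
      ⊆ (powersetCard t Yᶜ).biUnion
          fun T => univ.filter fun G : SimpleGraph (Fin n) => ∀ v ∈ T, #(nonNbrs G v Y) ≤ m := by
    intro G hG
    obtain ⟨T, hTsub, hTcard⟩ := exists_subset_card_eq (mem_filter.mp hG).2
    refine mem_biUnion.mpr ⟨T, mem_powersetCard.mpr ⟨fun v hv => ?_, hTcard⟩,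
      mem_filter.mpr ⟨mem_univ _, fun v hv => (mem_filter.mp (hTsub hv)).2.2⟩⟩
    exact mem_compl.mpr (mem_filter.mp (hTsub hv)).2.1
  calc _ ≤ ∑ T ∈ powersetCard t Yᶜ, #(univ.filter fun G : SimpleGraph (Fin n) =>
          ∀ v ∈ T, #(nonNbrs G v Y) ≤ m) * 2 ^ (t * #Y) := by
        rw [← sum_mul]
        exact Nat.mul_le_mul_right _ ((card_le_card hcover).trans card_biUnion_le)
    _ ≤ ∑ T ∈ powersetCard t Yᶜ, (∑ k ∈ range (m + 1), (#Y).choose k) ^ t * 2 ^ n.choose 2 := by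
        refine sum_le_sum fun T hT => ?_
        obtain ⟨hTY, rfl⟩ := mem_powersetCard.mp hT
        exact card_forall_nonNbrs_le_mul_le (subset_compl_iff_disjoint_right.mp hTY) m
    _ ≤ _ := by
        rw [sum_const, card_powersetCard, smul_eq_mul]
        exact Nat.mul_le_mul_right _ (Nat.choose_le_choose t (card_le_univ _ |>.trans_eq
          (Fintype.card_fin n)))

lemma gnp_half_many_fewNonNbrs_le {n : ℕ} (Y : Finset (Fin n)) (m t : ℕ) :
    gnp n (1/2) {G | t ≤ #(fewNonNbrs G Y m)}
      ≤ ENNReal.ofReal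
          (n.choose t * (∑ k ∈ range (m + 1), ((#Y).choose k : ℝ)) ^ t / 2 ^ (t * #Y)) := by
  rw [gnp_half_apply]
  refine ENNReal.ofReal_le_ofReal ?_
  rw [div_le_div_iff₀ (by positivity) (by positivity), mul_assoc]
  convert (Nat.cast_le (α := ℝ)).mpr (card_many_fewNonNbrs_mul_le Y m t) using 1 <;> push_cast
  · congr 2
    simp only [Set.mem_ofPred_eq]
  · rfl

lemma eventually_mul_log_le_sqrt {c : ℝ} (hc : 0 < c) :
    ∀ᶠ x : ℝ in atTop, c * Real.log x ≤ √x := by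
  filter_upwards [(isLittleO_log_rpow_atTop one_half_pos).def (inv_pos.mpr hc),
    Real.tendsto_log_atTop.eventually_ge_atTop 0, eventually_ge_atTop 0] with x hx hlog hx₀
  rw [Real.norm_of_nonneg hlog, Real.norm_of_nonneg (by positivity), ← Real.sqrt_eq_rpow] at hx
  calc c * Real.log x ≤ c * (c⁻¹ * √x) := mul_le_mul_of_nonneg_left hx hc.le
    _ = √x := by field_simp

lemma choose_mul_pow_div_le_exp {n t y : ℕ} {B ε : ℝ} (hn : 0 < n) (hB₀ : 0 ≤ B)
    (hB : B ≤ Real.exp (ε * y)) :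
    n.choose t * B ^ t / 2 ^ (t * y)
      ≤ Real.exp (t * (Real.log n + ε * y - y * Real.log 2)) := by
  have hchoose : (n.choose t : ℝ) ≤ Real.exp (t * Real.log n) := by
    rw [Real.exp_nat_mul, Real.exp_log (by exact_mod_cast hn)]
    exact_mod_cast Nat.choose_le_pow n t
  have htwo : (2 : ℝ) ^ (t * y) = Real.exp (t * (y * Real.log 2)) := by
    rw [Real.exp_nat_mul, Real.exp_nat_mul, Real.exp_log two_pos, ← pow_mul, mul_comm]
  calc n.choose t * B ^ t / 2 ^ (t * y)
      ≤ Real.exp (t * Real.log n) * Real.exp (ε * y) ^ t / Real.exp (t * (y * Real.log 2)) := by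
        rw [htwo]
        gcongr
    _ = _ := by
        rw [← Real.exp_nat_mul, ← Real.exp_add, ← Real.exp_sub]
        ring_nf

lemma union_bound_exponent_le {ε ℓ L y t : ℝ} (hε : 0 < ε) (hε₁ : ε ≤ 1/100) (hℓ : 0 ≤ ℓ)
    (hL : 0 ≤ L) (hy : 15 / ε * ℓ ≤ y) (ht : (1 / Real.log 2 + 3 * ε) * L ≤ t) :
    t * (ℓ + ε * y - y * Real.log 2) ≤ -(1 + ε / 2) * y * L := by
  have hlog₁ := Real.log_two_gt_d9
  have hlog₂ := Real.log_two_lt_d9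
  set c := 1 / Real.log 2 + 3 * ε
  have hinv : 1 / Real.log 2 ≤ 1.4428 := by
    rw [div_le_iff₀ (by positivity)]; nlinarith
  have hc : c ≤ 3 / 2 := by linarith
  have hc₀ : 0 ≤ c := by positivity
  -- `c (ln 2 - ε) = 1 + ε (3 ln 2 - 1 / ln 2 - 3ε)` and `3 ln 2 - 1 / ln 2 > 0.63`
  have hcgain : 1 + 3 / 5 * ε ≤ c * (Real.log 2 - ε) := by
    have : c * (Real.log 2 - ε) = 1 - 1 / Real.log 2 * ε + 3 * ε * Real.log 2 - 3 * ε * ε := by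
      simp only [c]; field_simp; ring
    rw [this]; nlinarith
  have hℓy : 15 * ℓ ≤ ε * y := by
    have := mul_le_mul_of_nonneg_left hy hε.le
    rwa [← mul_assoc, mul_div_cancel₀ _ hε.ne'] at this
  have hgap₀ : 0 ≤ y * (Real.log 2 - ε) - ℓ := by nlinarith
  have hgap : (1 + ε / 2) * y ≤ c * (y * (Real.log 2 - ε) - ℓ) := by nlinarith
  calc t * (ℓ + ε * y - y * Real.log 2) = -(t * (y * (Real.log 2 - ε) - ℓ)) := by ring
    _ ≤ -(c * L * (y * (Real.log 2 - ε) - ℓ)) := by gcongr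
    _ ≤ -(1 + ε / 2) * y * L := by nlinarith

/-- for sufficiently small `ε > 0`, `α ∈ (0,1/2)` with
`|α ln α + (1−α) ln(1−α)| < ε`, `t₂ = ⌊(1/ln 2 + 3ε)·ln ln n⌋`, `n` large and any fixed
`Y` with `|Y| = y ≥ (ln n)^{2+3ε}√n`, the probability that more than `t₂` vertices
`v ∉ Y` satisfy `|N₀(v,Y)| ≤ α y` is at most `e^{−(1+ε/2)·y·ln ln n}`. -/
theorem statement8 :
    ∃ ε₀ : ℝ, 0 < ε₀ ∧ ∀ ε : ℝ, 0 < ε → ε < ε₀ →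
      ∀ α : ℝ, α ∈ Set.Ioo (0:ℝ) (1/2) →
        |α * Real.log α + (1 - α) * Real.log (1 - α)| < ε →
      ∃ n₀ : ℕ, ∀ n : ℕ, n₀ ≤ n → ∀ Y : Finset (Fin n),
        Real.log n ^ ((2:ℝ) + 3*ε) * Real.sqrt n ≤ (Y.card : ℝ) →
        gnp n (1/2) {G : SimpleGraph (Fin n) |
          ⌊(1/Real.log 2 + 3*ε) * Real.log (Real.log n)⌋₊ <
            (Finset.univ.filter (fun v : Fin n =>
              v ∉ Y ∧ ((nonNbrs G v Y).card : ℝ) ≤ α * Y.card)).card}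
        ≤ ENNReal.ofReal (Real.exp (-(1 + ε/2) * Y.card * Real.log (Real.log n))) := by
  refine ⟨1/100, by norm_num, fun ε hε hε₀ α ⟨hα₀, hα₁⟩ hent => ?_⟩
  obtain ⟨n₀, hn₀⟩ := eventually_atTop.mp <| tendsto_natCast_atTop_atTop.eventually <|
    (Real.tendsto_log_atTop.eventually_ge_atTop 1).and (eventually_mul_log_le_sqrt (c := 15 / ε)
      (by positivity))
  refine ⟨n₀, fun n hn Y hY => ?_⟩
  obtain ⟨hlog, hsqrt⟩ := hn₀ n hn
  have hy : 15 / ε * Real.log n ≤ #Y := hsqrt.trans <| (le_mul_of_one_le_left (Real.sqrt_nonneg _)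
    (Real.one_le_rpow hlog (by positivity))).trans hY
  rw [← Real.binEntropy_eq_abs hα₀.le (by linarith)] at hent
  have hn_pos : 0 < n := Nat.pos_of_ne_zero (by rintro rfl; norm_num at hlog)
  set t₂ := ⌊(1/Real.log 2 + 3*ε) * Real.log (Real.log n)⌋₊
  have hevent : {G : SimpleGraph (Fin n) |
      t₂ < #(univ.filter fun v => v ∉ Y ∧ (#(nonNbrs G v Y) : ℝ) ≤ α * #Y)} ⊆
      {G | t₂ + 1 ≤ #(fewNonNbrs G Y ⌊α * #Y⌋₊)} := by
    intro G hG
    simpa only [fewNonNbrs, Set.mem_ofPred_eq, Nat.add_one_le_iff,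
      Nat.le_floor_iff (by positivity : 0 ≤ α * #Y)] using hG
  have hsmall : ∑ k ∈ range (⌊α * #Y⌋₊ + 1), ((#Y).choose k : ℝ) ≤ Real.exp (ε * #Y) :=
    (sum_range_choose_le_exp_binEntropy hα₀ hα₁.le (Nat.floor_le (by positivity))).trans
      (Real.exp_le_exp.mpr (by rw [mul_comm]; gcongr))
  calc gnp n (1/2) _ ≤ gnp n (1/2) _ := measure_mono hevent
    _ ≤ _ := gnp_half_many_fewNonNbrs_le Y _ _
    _ ≤ _ := ENNReal.ofReal_le_ofReal <| (choose_mul_pow_div_le_exp hn_pos (by positivity)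
        hsmall).trans <| Real.exp_le_exp.mpr <| by
          push_cast
          exact union_bound_exponent_le hε hε₀.le (by linarith) (Real.log_nonneg hlog) hy
            (Nat.lt_floor_add_one _).le

end
end

section
/- Fix a sufficiently small ε > 0 and α ∈ (0,1/2) with |α·ln α + (1−α)·ln(1−α)| < ε, and set t₁ = ⌊(ln n)²⌋. Fix a set Y ⊆ [n] of size y ≥ (ln n)^{2+3ε}·√n. For n large enough, the probability that in G(n,1/2) the number of vertices v ∈ [n]∖Y with α·y < |N₀(v,Y)| < (1/2 − (ε/5)·(ln ln n)/(ln n))·y exceeds t₁ is at most e^{−(ε²/50)·y·(ln ln n)²}. -/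
open MeasureTheory Filter Real
open scoped Classical ENNReal

noncomputable section

/-!
Union bound over the sets `S` of `t₁ + 1` vertices outside `Y`. For a fixed `S` the pairs
`S × Y` are distinct edges of `K_n`, so in `G(n,1/2)` (uniform on the `2^C(n,2)` graphs) the rows
`v ↦ N₀(v, Y)`, `v ∈ S`, are independent uniform subsets of `Y`. By Hoeffding, each row has fewer
than `(1/2 − δ)y` elements with probability at most `e^{−2δ²y}`. With `δ = (ε/5)(ln ln n)/(ln n)`
and `t₁ + 1 > (ln n)²` this yields `n^{t₁+1} e^{−2δ²y(t₁+1)} ≤ e^{−(ε²/50) y (ln ln n)²}`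
as soon as `y ≥ (ln n)²√n`.
-/

section

open Finset Function

namespace SimpleGraph

def equivEdgeIndicator (V : Type*) : SimpleGraph V ≃ ({e : Sym2 V // ¬ e.IsDiag} → Bool) where
  toFun G e := decide (e.1 ∈ G.edgeSet)
  invFun f := fromEdgeSet {e | ∃ h : ¬ e.IsDiag, f ⟨e, h⟩}
  left_inv G := by
    ext v w
    have := G.ne_of_adj (a := v) (b := w)
    simp only [fromEdgeSet_adj, Set.mem_ofPred_eq, mem_edgeSet, decide_eq_true_eq,
      Sym2.mk_isDiag_iff]
    tauto
  right_inv f := by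
    funext ⟨e, he⟩
    induction e using Sym2.ind with
    | _ v w => simp_all

@[simp]
theorem equivEdgeIndicator_apply_mk {V : Type*} (G : SimpleGraph V) (v w : V)
    (h : ¬ (s(v, w) : Sym2 V).IsDiag) : equivEdgeIndicator V G ⟨s(v, w), h⟩ = decide (G.Adj v w) :=
  rfl

end SimpleGraph

theorem card_filter_comp_mul_two_pow {I κ : Type*} [Fintype I] [Fintype κ] [DecidableEq I]
    [DecidableEq κ] {ι : κ → I} (hι : Injective ι) (P : (κ → Bool) → Prop) [DecidablePred P] :
    #{f : I → Bool | P (f ∘ ι)} * 2 ^ Fintype.card κ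
      = #{g : κ → Bool | P g} * 2 ^ Fintype.card I := by
  let e : (I → Bool) ≃ (κ → Bool) × ({i // i ∉ Set.range ι} → Bool) :=
    (Equiv.piEquivPiSubtypeProd (· ∈ Set.range ι) _).trans
      (Equiv.prodCongr ((Equiv.ofInjective ι hι).arrowCongr (Equiv.refl Bool)).symm
        (Equiv.refl _))
  have he : ∀ f, (e f).1 = f ∘ ι := fun f => rfl
  have hcard : Fintype.card {i // i ∉ Set.range ι} + Fintype.card κ = Fintype.card I := by
    have hle := Fintype.card_le_of_injective ι hι
    have hrange : Fintype.card {i // i ∈ Set.range ι} = Fintype.card κ :=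
      (Fintype.card_congr (Equiv.ofInjective ι hι)).symm
    rw [Fintype.card_subtype_compl, hrange]
    omega
  rw [card_equiv e (t := ({g | P g} : Finset (κ → Bool)) ×ˢ univ) (fun f => by simp [he]),
    card_product]
  simp [← hcard, pow_add, mul_assoc]

theorem card_filter_forall_curry {α β γ : Type*} [Fintype α] [Fintype β] [Fintype γ]
    [DecidableEq α] [DecidableEq β] (R : (β → γ) → Prop) [DecidablePred R] :
    #{g : α × β → γ | ∀ a, R (fun b => g (a, b))} = #{h : β → γ | R h} ^ Fintype.card α := by
  rw [card_equiv (Equiv.curry α β γ) (t := Fintype.piFinset fun _ => {h | R h})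
    (fun g => by simp; rfl), Fintype.card_piFinset, prod_const, card_univ]

theorem card_filter_le_card_filter_le_sum_powersetCard {α β : Type*} [Fintype α]
    (W : Finset β) (T : ℕ) (P : α → β → Prop) [∀ a, DecidablePred (P a)] :
    #{a | T ≤ #(W.filter (P a))} ≤ ∑ S ∈ W.powersetCard T, #{a | ∀ v ∈ S, P a v} := by
  refine (card_le_card fun a ha => ?_).trans card_biUnion_le
  obtain ⟨S, hSW, hS⟩ := exists_subset_card_eq (mem_filter.1 ha).2
  refine mem_biUnion.2 ⟨S, mem_powersetCard.2 ⟨hSW.trans (filter_subset _ _), hS⟩, ?_⟩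
  simpa using fun v hv => (mem_filter.1 (hSW hv)).2

theorem card_filter_card_false_eq_le {Z : Type*} [Fintype Z] [DecidableEq Z] (k : ℕ) :
    #{h : Z → Bool | #{z | h z = false} = k} ≤ (Fintype.card Z).choose k := by
  rw [← card_univ, ← card_powersetCard]
  refine card_le_card_of_injOn (fun h => ({z | h z = false} : Finset Z)) (fun h hh => ?_)
    fun h _ h' _ hhh' => ?_
  · simpa [mem_powersetCard] using hh
  · funext z
    simpa using congrArg (z ∈ ·) hhh'

theorem one_add_exp_neg_le (t : ℝ) : 1 + exp (-t) ≤ 2 * exp (t ^ 2 / 8 - t / 2) := by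
  have hcosh : 1 + exp (-t) = 2 * exp (-(t / 2)) * cosh (t / 2) := by
    have hsq : exp (-t) = exp (-(t / 2)) ^ 2 := by rw [← exp_nat_mul]; ring_nf
    have hinv : exp (-(t / 2)) * exp (t / 2) = 1 := by rw [← exp_add]; simp
    rw [cosh_eq, hsq]
    linear_combination -hinv
  calc 1 + exp (-t) = 2 * exp (-(t / 2)) * cosh (t / 2) := hcosh
    _ ≤ 2 * exp (-(t / 2)) * exp ((t / 2) ^ 2 / 2) := by gcongr; exact cosh_le_exp_half_sq _
    _ = 2 * exp (t ^ 2 / 8 - t / 2) := by rw [mul_assoc, ← exp_add]; ring_nf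

theorem sum_choose_lt_le (y : ℕ) {δ : ℝ} (hδ : 0 ≤ δ) :
    ∑ k ∈ (range (y + 1)).filter (fun k : ℕ => (k : ℝ) < (1 / 2 - δ) * y), (y.choose k : ℝ)
      ≤ 2 ^ y * exp (-(2 * δ ^ 2) * y) := by
  set m := (1 / 2 - δ) * (y : ℝ)
  -- exponential moment method; `t = 4δ` is the optimal tilt
  set t := 4 * δ
  calc ∑ k ∈ (range (y + 1)).filter (fun k : ℕ => (k : ℝ) < m), (y.choose k : ℝ)
      ≤ ∑ k ∈ (range (y + 1)).filter (fun k : ℕ => (k : ℝ) < m),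
          (y.choose k : ℝ) * exp (t * (m - k)) := by
        refine sum_le_sum fun k hk => le_mul_of_one_le_right (by positivity) (one_le_exp ?_)
        have := (mem_filter.1 hk).2
        exact mul_nonneg (by positivity) (by linarith)
    _ ≤ ∑ k ∈ range (y + 1), (y.choose k : ℝ) * exp (t * (m - k)) :=
        sum_le_sum_of_subset_of_nonneg (filter_subset _ _) fun _ _ _ => by positivity
    _ = exp (t * m) * (exp (-t) + 1) ^ y := by
        rw [add_pow, mul_sum]
        refine sum_congr rfl fun k _ => ?_
        rw [one_pow, mul_one, ← exp_nat_mul, mul_sub, sub_eq_add_neg, exp_add]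
        ring_nf
    _ ≤ exp (t * m) * (2 * exp (t ^ 2 / 8 - t / 2)) ^ y := by
        gcongr
        rw [add_comm]
        exact one_add_exp_neg_le t
    _ = 2 ^ y * exp (-(2 * δ ^ 2) * y) := by
        rw [mul_pow, ← exp_nat_mul, mul_left_comm, ← exp_add]
        simp only [t, m]
        ring_nf

theorem card_boolFun_card_false_lt_le {Z : Type*} [Fintype Z] [DecidableEq Z] {δ : ℝ}
    (hδ : 0 ≤ δ) :
    (#{h : Z → Bool | (#{z | h z = false} : ℝ) < (1 / 2 - δ) * Fintype.card Z} : ℝ)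
      ≤ 2 ^ Fintype.card Z * exp (-(2 * δ ^ 2) * Fintype.card Z) := by
  set N := Fintype.card Z
  have hmaps : ∀ h ∈ ({h : Z → Bool | (#{z | h z = false} : ℝ) < (1 / 2 - δ) * N} : Finset _),
      #{z | h z = false} ∈ (range (N + 1)).filter fun k : ℕ => (k : ℝ) < (1 / 2 - δ) * N := by
    intro h hh
    refine mem_filter.2 ⟨mem_range.2 (Nat.lt_succ_of_le ?_), (mem_filter.1 hh).2⟩
    exact (card_filter_le _ _).trans_eq card_univ
  have hcount : #{h : Z → Bool | (#{z | h z = false} : ℝ) < (1 / 2 - δ) * N}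
      ≤ ∑ k ∈ (range (N + 1)).filter (fun k : ℕ => (k : ℝ) < (1 / 2 - δ) * N), N.choose k := by
    rw [card_eq_sum_card_fiberwise hmaps]
    exact sum_le_sum fun k _ =>
      (card_le_card (filter_subset_filter _ (subset_univ _))).trans (card_filter_card_false_eq_le k)
  calc (#{h : Z → Bool | (#{z | h z = false} : ℝ) < (1 / 2 - δ) * N} : ℝ)
      ≤ ∑ k ∈ (range (N + 1)).filter (fun k : ℕ => (k : ℝ) < (1 / 2 - δ) * N),
          (N.choose k : ℝ) := by
        exact_mod_cast hcount
    _ ≤ 2 ^ N * exp (-(2 * δ ^ 2) * N) := sum_choose_lt_le N hδ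

theorem card_nonNbrs_eq {n : ℕ} (G : SimpleGraph (Fin n)) {v : Fin n} {Y : Finset (Fin n)}
    (hv : v ∉ Y) : #(nonNbrs G v Y) = #{u : Y | ¬ G.Adj v u} := by
  have : nonNbrs G v Y = Y.filter (¬ G.Adj v ·) :=
    filter_congr fun u hu => and_iff_right (ne_of_mem_of_not_mem hu hv)
  rw [this, univ_eq_attach, filter_attach (¬ G.Adj v ·), card_map, card_attach]

theorem card_filter_forall_nonNbrs_mul_two_pow {n : ℕ} {S Y : Finset (Fin n)}
    (hSY : Disjoint S Y) (P : ℕ → Prop) :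
    #{G : SimpleGraph (Fin n) | ∀ v ∈ S, P #(nonNbrs G v Y)} * 2 ^ (#S * #Y)
      = #{h : Y → Bool | P #{u | h u = false}} ^ #S * 2 ^ n.choose 2 := by
  let ι : S × Y → {e : Sym2 (Fin n) // ¬ e.IsDiag} := fun p =>
    ⟨s(p.1, p.2), by simpa using (ne_of_mem_of_not_mem p.2.2 (disjoint_left.1 hSY p.1.2)).symm⟩
  have hι : Injective ι := by
    rintro ⟨v, u⟩ ⟨v', u'⟩ h
    simp only [ι, Subtype.mk.injEq, Sym2.eq_iff, Subtype.val_inj] at h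
    rcases h with ⟨rfl, rfl⟩ | ⟨h, -⟩
    · rfl
    · exact absurd (h ▸ u'.2) (disjoint_left.1 hSY v.2)
  have hG : ∀ G : SimpleGraph (Fin n), (∀ v ∈ S, P #(nonNbrs G v Y)) ↔
      ∀ v : S, P #{u | (SimpleGraph.equivEdgeIndicator _ G ∘ ι) (v, u) = false} := by
    intro G
    rw [Subtype.forall]
    refine forall₂_congr fun v hv => ?_
    simp [ι, card_nonNbrs_eq G (disjoint_left.1 hSY hv)]
  rw [card_equiv (SimpleGraph.equivEdgeIndicator _)
      (t := {f | ∀ v : S, P #{u | (f ∘ ι) (v, u) = false}}) (fun G => by simpa using hG G),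
    ← Fintype.card_coe S, ← Fintype.card_coe Y, ← Fintype.card_prod,
    card_filter_comp_mul_two_pow hι (fun g => ∀ v : S, P #{u | g (v, u) = false}),
    card_filter_forall_curry (fun h : Y → Bool => P #{u | h u = false}),
    Sym2.card_subtype_not_diag, Fintype.card_fin]

theorem card_filter_forall_nonNbrs_lt_div_le {n : ℕ} {S Y : Finset (Fin n)} (hSY : Disjoint S Y)
    {δ : ℝ} (hδ : 0 ≤ δ) :
    (#{G : SimpleGraph (Fin n) | ∀ v ∈ S, (#(nonNbrs G v Y) : ℝ) < (1 / 2 - δ) * #Y} : ℝ)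
        / 2 ^ n.choose 2
      ≤ exp (-(2 * δ ^ 2) * #Y) ^ #S := by
  have hcount := card_filter_forall_nonNbrs_mul_two_pow hSY (fun k => (k : ℝ) < (1 / 2 - δ) * #Y)
  have hbool := card_boolFun_card_false_lt_le (Z := Y) hδ
  simp only [Fintype.card_coe] at hbool
  set c := #{h : Y → Bool | (#{u | h u = false} : ℝ) < (1 / 2 - δ) * #Y}
  calc (#{G : SimpleGraph (Fin n) | ∀ v ∈ S, (#(nonNbrs G v Y) : ℝ) < (1 / 2 - δ) * #Y} : ℝ)
        / 2 ^ n.choose 2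
      = (c / 2 ^ #Y) ^ #S := by
        rw [div_pow, ← pow_mul', div_eq_div_iff (by positivity) (by positivity)]
        exact_mod_cast hcount
    _ ≤ exp (-(2 * δ ^ 2) * #Y) ^ #S := by
        gcongr
        rw [div_le_iff₀ (by positivity)]
        linarith

theorem gnp_half_apply_le (n : ℕ) (A : Set (SimpleGraph (Fin n))) :
    gnp n (1 / 2) A ≤ ENNReal.ofReal (#{G | G ∈ A} / 2 ^ n.choose 2) := by
  have hweight : ∀ e : ℕ,
      (1 / 2 : ℝ) ^ e * (1 - 1 / 2) ^ (n.choose 2 - e) ≤ (1 / 2) ^ n.choose 2 := by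
    intro e
    rw [show (1 : ℝ) - 1 / 2 = 1 / 2 by norm_num, ← pow_add]
    exact pow_le_pow_of_le_one (by norm_num) (by norm_num) (by omega)
  rw [gnp, Measure.finsetSum_apply]
  calc ∑ G, (ENNReal.ofReal ((1 / 2 : ℝ) ^ edgeCount G * (1 - 1 / 2) ^ (n.choose 2 - edgeCount G))
        • Measure.dirac G) A
      = ∑ G ∈ {G | G ∈ A}, ENNReal.ofReal
          ((1 / 2 : ℝ) ^ edgeCount G * (1 - 1 / 2) ^ (n.choose 2 - edgeCount G)) := by
        rw [sum_filter]
        refine sum_congr rfl fun G _ => ?_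
        simp [Measure.dirac_apply' _ (MeasurableSpace.measurableSet_top), Set.indicator_apply]
    _ ≤ ∑ G ∈ {G | G ∈ A}, ENNReal.ofReal ((1 / 2 : ℝ) ^ n.choose 2) :=
        sum_le_sum fun G _ => ENNReal.ofReal_le_ofReal (hweight _)
    _ = ENNReal.ofReal (#{G | G ∈ A} / 2 ^ n.choose 2) := by
        rw [sum_const, nsmul_eq_mul, ← ENNReal.ofReal_natCast,
          ← ENNReal.ofReal_mul (by positivity), one_div, inv_pow, div_eq_mul_inv]

theorem card_filter_le_card_nonNbrs_lt_div_le {n : ℕ} (Y : Finset (Fin n)) (T : ℕ) {δ : ℝ}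
    (hδ : 0 ≤ δ) :
    (#{G : SimpleGraph (Fin n) |
        T ≤ #(Yᶜ.filter fun v => (#(nonNbrs G v Y) : ℝ) < (1 / 2 - δ) * #Y)} : ℝ)
        / 2 ^ n.choose 2
      ≤ (n : ℝ) ^ T * exp (-(2 * δ ^ 2) * #Y) ^ T := by
  have hsets : #(Yᶜ.powersetCard T) ≤ n ^ T := by
    rw [card_powersetCard]
    exact (Nat.choose_le_pow _ _).trans (Nat.pow_le_pow_left (card_le_univ _ |>.trans_eq
      (Fintype.card_fin n)) T)
  calc (#{G : SimpleGraph (Fin n) |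
        T ≤ #(Yᶜ.filter fun v => (#(nonNbrs G v Y) : ℝ) < (1 / 2 - δ) * #Y)} : ℝ)
        / 2 ^ n.choose 2
      ≤ (∑ S ∈ Yᶜ.powersetCard T,
          (#{G : SimpleGraph (Fin n) | ∀ v ∈ S, (#(nonNbrs G v Y) : ℝ) < (1 / 2 - δ) * #Y} : ℝ))
          / 2 ^ n.choose 2 := by
        gcongr
        exact_mod_cast card_filter_le_card_filter_le_sum_powersetCard Yᶜ T
          fun (G : SimpleGraph (Fin n)) v => (#(nonNbrs G v Y) : ℝ) < (1 / 2 - δ) * #Y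
    _ ≤ ∑ _S ∈ Yᶜ.powersetCard T, exp (-(2 * δ ^ 2) * #Y) ^ T := by
        rw [sum_div]
        refine sum_le_sum fun S hS => ?_
        obtain ⟨hSY, rfl⟩ := mem_powersetCard.1 hS
        exact card_filter_forall_nonNbrs_lt_div_le (subset_compl_iff_disjoint_right.1 hSY) hδ
    _ ≤ (n : ℝ) ^ T * exp (-(2 * δ ^ 2) * #Y) ^ T := by
        rw [sum_const, nsmul_eq_mul]
        gcongr
        exact_mod_cast hsets

theorem eventually_log_bounds {c : ℝ} (hc : 0 < c) :
    ∀ᶠ n : ℕ in atTop, 1 ≤ log n ∧ 1 ≤ log (log n) ∧ 34 * log n ≤ c * √n := by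
  have hlog : Tendsto (fun n : ℕ => log n) atTop atTop :=
    tendsto_log_atTop.comp tendsto_natCast_atTop_atTop
  have hsqrt : ∀ᶠ x : ℝ in atTop, 34 * log x ≤ c * √x := by
    filter_upwards [(isLittleO_log_rpow_atTop one_half_pos).def (by positivity : 0 < c / 34),
      eventually_ge_atTop 1] with x hx hx1
    rw [norm_of_nonneg (log_nonneg hx1), norm_of_nonneg (by positivity), ← sqrt_eq_rpow] at hx
    linarith
  exact (hlog.eventually_ge_atTop 1).and <|
    ((tendsto_log_atTop.comp hlog).eventually_ge_atTop 1).and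
      (tendsto_natCast_atTop_atTop.eventually hsqrt)

theorem pow_mul_exp_pow_le_exp_loglog {n : ℕ} {ε y : ℝ} (hℓ : 1 ≤ log n) (hL : 1 ≤ log (log n))
    (hsqrt : 34 * log n ≤ ε ^ 2 * √n) (hy : log n ^ 2 * √n ≤ y) :
    (n : ℝ) ^ (⌊log n ^ 2⌋₊ + 1)
        * exp (-(2 * (ε / 5 * (log (log n) / log n)) ^ 2) * y) ^ (⌊log n ^ 2⌋₊ + 1)
      ≤ exp (-(ε ^ 2 / 50) * y * log (log n) ^ 2) := by
  set ℓ := log n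
  set L := log ℓ
  set T := ⌊ℓ ^ 2⌋₊ + 1
  have hn : (n : ℝ) = exp ℓ :=
    (exp_log (Nat.cast_pos.2 (Nat.pos_of_ne_zero (by rintro rfl; norm_num [ℓ] at hℓ)))).symm
  have hT : ℓ ^ 2 ≤ T := by simpa [T] using (Nat.lt_floor_add_one (ℓ ^ 2)).le
  have hT' : (T : ℝ) ≤ ℓ ^ 2 + 1 := by
    simpa [T] using Nat.floor_le (sq_nonneg ℓ)
  have hy0 : 0 ≤ y := le_trans (by positivity) hy
  have hdecay : 2 / 25 * ε ^ 2 * L ^ 2 * y ≤ T * (2 * (ε / 5 * (L / ℓ)) ^ 2 * y) := by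
    have : 2 * (ε / 5 * (L / ℓ)) ^ 2 * y = 2 / 25 * ε ^ 2 * L ^ 2 * y / ℓ ^ 2 := by
      field_simp
      ring
    rw [this, ← mul_div_assoc, le_div_iff₀ (by positivity), mul_comm]
    gcongr
  have hcost : T * ℓ ≤ 2 * ℓ ^ 3 := by nlinarith
  have hsmall : 34 * ℓ ^ 3 ≤ ε ^ 2 * y * L ^ 2 := by
    calc 34 * ℓ ^ 3 = ℓ ^ 2 * (34 * ℓ) := by ring
      _ ≤ ℓ ^ 2 * (ε ^ 2 * √n) := by gcongr
      _ = ε ^ 2 * (ℓ ^ 2 * √n) := by ring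
      _ ≤ ε ^ 2 * y := by gcongr
      _ ≤ ε ^ 2 * y * L ^ 2 := le_mul_of_one_le_right (by positivity) (one_le_pow₀ hL)
  -- the union-bound cost `T ℓ ≤ 2ℓ³ ≤ ε² y L² / 17` eats less than `2/25 - 1/50` of the decay
  rw [hn, ← exp_nat_mul, ← exp_nat_mul, ← exp_add, exp_le_exp]
  linarith [show 0 ≤ ε ^ 2 * y * L ^ 2 by positivity]

end

/-- for sufficiently small `ε > 0`, `α ∈ (0,1/2)` with
`|α ln α + (1−α) ln(1−α)| < ε`, `t₁ = ⌊(ln n)²⌋`, `n` large and any fixed `Y` with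
`|Y| = y ≥ (ln n)^{2+3ε}√n`, the probability that more than `t₁` vertices `v ∉ Y`
satisfy `α y < |N₀(v,Y)| < (1/2 − (ε/5)·(ln ln n)/(ln n))·y` is at most
`e^{−(ε²/50)·y·(ln ln n)²}`. -/
theorem statement9 :
    ∃ ε₀ : ℝ, 0 < ε₀ ∧ ∀ ε : ℝ, 0 < ε → ε < ε₀ →
      ∀ α : ℝ, α ∈ Set.Ioo (0:ℝ) (1/2) →
        |α * Real.log α + (1 - α) * Real.log (1 - α)| < ε →
      ∃ n₀ : ℕ, ∀ n : ℕ, n₀ ≤ n → ∀ Y : Finset (Fin n),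
        Real.log n ^ ((2:ℝ) + 3*ε) * Real.sqrt n ≤ (Y.card : ℝ) →
        gnp n (1/2) {G : SimpleGraph (Fin n) |
          ⌊Real.log n ^ 2⌋₊ <
            (Finset.univ.filter (fun v : Fin n =>
              v ∉ Y ∧ α * Y.card < ((nonNbrs G v Y).card : ℝ) ∧
              ((nonNbrs G v Y).card : ℝ)
                < (1/2 - (ε/5) * (Real.log (Real.log n) / Real.log n)) * Y.card)).card}
        ≤ ENNReal.ofReal
            (Real.exp (-(ε^2/50) * Y.card * Real.log (Real.log n) ^ 2)) := by
  refine ⟨1, one_pos, fun ε hε _ α _ _ => ?_⟩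
  obtain ⟨n₀, hn₀⟩ := eventually_atTop.1 (eventually_log_bounds (pow_pos hε 2))
  refine ⟨n₀, fun n hn Y hY => ?_⟩
  obtain ⟨hℓ, hL, hsqrt⟩ := hn₀ n hn
  set δ := ε / 5 * (Real.log (Real.log n) / Real.log n)
  have hδ : 0 ≤ δ := by positivity
  have hy : Real.log n ^ 2 * Real.sqrt n ≤ Y.card := by
    refine le_trans ?_ hY
    gcongr
    exact_mod_cast Real.rpow_le_rpow_of_exponent_le hℓ (by linarith : (2 : ℝ) ≤ 2 + 3 * ε)
  calc _ ≤ gnp n (1 / 2) {G | ⌊Real.log n ^ 2⌋₊ + 1 ≤ (Yᶜ.filter fun v =>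
          ((nonNbrs G v Y).card : ℝ) < (1 / 2 - δ) * Y.card).card} := by
        refine measure_mono fun G hG => Nat.succ_le_of_lt (hG.trans_le (Finset.card_le_card ?_))
        intro v hv
        simp only [Finset.mem_filter, Finset.mem_univ, true_and, Finset.mem_compl] at hv ⊢
        exact ⟨hv.1, hv.2.2⟩
    _ ≤ _ := gnp_half_apply_le n _
    _ ≤ _ := ENNReal.ofReal_le_ofReal <| by
        simp only [Set.mem_ofPred_eq]
        exact (card_filter_le_card_nonNbrs_lt_div_le Y _ hδ).trans
          (pow_mul_exp_pow_le_exp_loglog hℓ hL hsqrt hy)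
end
end

section
/- Let G be a graph, let Z₁,...,Z_r be pairwise disjoint m-element sets of vertices of G, and let W be a finite set of vertices of G disjoint from Z₁ ∪ ... ∪ Z_r. Suppose that for each w ∈ W there is β_w ∈ [0,1] such that w has at least β_w·m non-neighbors in each Zᵢ (i = 1,...,r). Then the number of transversals — sets consisting of exactly one vertex from each Zᵢ — that contain at least one non-neighbor of every w ∈ W is at least m^r·(1 − Σ_{w ∈ W} (1 − β_w)^r). -/
open MeasureTheory Filter Real
open scoped Classical ENNReal

noncomputable section

/-- if `Z₁,…,Z_r` are pairwise disjoint `m`-sets of vertices, `W` is a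
finite vertex set disjoint from their union, and every `w ∈ W` has at least `β_w·m`
non-neighbors in each `Zᵢ` (with `β_w ∈ [0,1]`), then the number of transversals of
`Z₁,…,Z_r` containing a non-neighbor of every `w ∈ W` is at least
`m^r·(1 − Σ_{w∈W}(1−β_w)^r)`. -/
theorem statement17 {V : Type*} [Fintype V] [DecidableEq V] (G : SimpleGraph V)
    (r m : ℕ) (Z : Fin r → Finset V)
    (hdisj : ∀ i j, i ≠ j → Disjoint (Z i) (Z j))
    (hcard : ∀ i, (Z i).card = m)
    (W : Finset V) (hW : Disjoint W (Finset.univ.biUnion Z))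
    (β : V → ℝ) (hβ : ∀ w ∈ W, β w ∈ Set.Icc (0:ℝ) 1)
    (hnon : ∀ w ∈ W, ∀ i,
      β w * m ≤ (((Z i).filter (fun u => u ≠ w ∧ ¬ G.Adj w u)).card : ℝ)) :
    (m : ℝ) ^ r * (1 - ∑ w ∈ W, (1 - β w) ^ r)
      ≤ ((Finset.univ.filter (fun S : Finset V =>
            (∀ i, (S ∩ Z i).card = 1) ∧ S ⊆ Finset.univ.biUnion Z ∧
            ∀ w ∈ W, ∃ u ∈ S, u ≠ w ∧ ¬ G.Adj w u)).card : ℝ) := by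
  classical
  set T : Finset (Fin r → V) := Fintype.piFinset (fun i => Z i) with hT
  set good : (Fin r → V) → Prop := fun f => ∀ w ∈ W, ∃ i, f i ≠ w ∧ ¬ G.Adj w (f i) with hgood
  set Good : Finset (Fin r → V) := T.filter good with hGoodDef
  set Bad : V → Finset (Fin r → V) :=
    fun w => Fintype.piFinset (fun i => (Z i).filter (fun u => ¬(u ≠ w ∧ ¬ G.Adj w u))) with hBadDef
  have hTmem : ∀ f : Fin r → V, f ∈ T ↔ ∀ i, f i ∈ Z i := fun f => Fintype.mem_piFinset
  have hTcard : T.card = m ^ r := by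
    rw [hT, Fintype.card_piFinset]
    simp [hcard]
  -- bound on each Bad set
  have hBadcard : ∀ w ∈ W, ((Bad w).card : ℝ) ≤ ((1 - β w) * m) ^ r := by
    intro w hw
    have h1 : (Bad w).card
        = ∏ i, ((Z i).filter (fun u => ¬(u ≠ w ∧ ¬ G.Adj w u))).card :=
      Fintype.card_piFinset _
    have hbound : ∀ i : Fin r,
        (((Z i).filter (fun u => ¬(u ≠ w ∧ ¬ G.Adj w u))).card : ℝ) ≤ (1 - β w) * m := by
      intro i
      have hsplit : ((Z i).filter (fun u => u ≠ w ∧ ¬ G.Adj w u)).card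
          + ((Z i).filter (fun u => ¬(u ≠ w ∧ ¬ G.Adj w u))).card = m := by
        rw [Finset.card_filter_add_card_filter_not, hcard]
      have h2 := hnon w hw i
      have h3 : (((Z i).filter (fun u => u ≠ w ∧ ¬ G.Adj w u)).card : ℝ)
          + (((Z i).filter (fun u => ¬(u ≠ w ∧ ¬ G.Adj w u))).card : ℝ) = m := by
        exact_mod_cast congrArg (fun n : ℕ => (n : ℝ)) hsplit
      nlinarith
    calc ((Bad w).card : ℝ)
        = ∏ i, (((Z i).filter (fun u => ¬(u ≠ w ∧ ¬ G.Adj w u))).card : ℝ) := by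
          rw [h1]; push_cast; ring
      _ ≤ ∏ _i : Fin r, ((1 - β w) * m) :=
          Finset.prod_le_prod (fun i _ => by positivity) (fun i _ => hbound i)
      _ = ((1 - β w) * m) ^ r := by simp
  -- covering of bad functions
  have hcover : T.filter (fun f => ¬ good f) ⊆ W.biUnion Bad := by
    intro f hf
    simp only [Finset.mem_filter] at hf
    obtain ⟨hfT, hbad⟩ := hf
    have hbad' : ∃ w ∈ W, ∀ i, ¬(f i ≠ w ∧ ¬ G.Adj w (f i)) := by
      by_contra hc
      push_neg at hc
      exact hbad hc
    obtain ⟨w, hw, hb⟩ := hbad'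
    refine Finset.mem_biUnion.2 ⟨w, hw, ?_⟩
    rw [hBadDef, Fintype.mem_piFinset]
    intro i
    exact Finset.mem_filter.2 ⟨(hTmem f).1 hfT i, fun h => hb i h⟩
  have hsum : T.card ≤ Good.card + ∑ w ∈ W, (Bad w).card := by
    have heq := Finset.card_filter_add_card_filter_not (s := T) (p := good)
    have h2 : (T.filter (fun f => ¬ good f)).card ≤ ∑ w ∈ W, (Bad w).card :=
      (Finset.card_le_card hcover).trans Finset.card_biUnion_le
    calc T.card = Good.card + (T.filter (fun f => ¬ good f)).card := heq.symm
      _ ≤ Good.card + ∑ w ∈ W, (Bad w).card := Nat.add_le_add_left h2 _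
  -- the intersection lemma
  have hinter : ∀ f ∈ T, ∀ i, (Finset.image f Finset.univ) ∩ Z i = {f i} := by
    intro f hf i
    ext u
    simp only [Finset.mem_inter, Finset.mem_image, Finset.mem_univ, true_and,
      Finset.mem_singleton]
    constructor
    · rintro ⟨⟨j, rfl⟩, hu⟩
      have hj : j = i := by
        by_contra hne
        exact Finset.disjoint_left.1 (hdisj j i hne) ((hTmem f).1 hf j) hu
      rw [hj]
    · rintro rfl
      exact ⟨⟨i, rfl⟩, (hTmem f).1 hf i⟩
  set target : Finset (Finset V) := Finset.univ.filter (fun S : Finset V =>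
      (∀ i, (S ∩ Z i).card = 1) ∧ S ⊆ Finset.univ.biUnion Z ∧
      ∀ w ∈ W, ∃ u ∈ S, u ≠ w ∧ ¬ G.Adj w u) with htarget
  have hmapmem : ∀ f ∈ Good, Finset.image f Finset.univ ∈ target := by
    intro f hf
    rw [hGoodDef, Finset.mem_filter] at hf
    obtain ⟨hfT, hfg⟩ := hf
    rw [htarget, Finset.mem_filter]
    refine ⟨Finset.mem_univ _, fun i => by rw [hinter f hfT i]; simp, ?_, ?_⟩
    · intro u hu
      obtain ⟨j, -, rfl⟩ := Finset.mem_image.1 hu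
      exact Finset.mem_biUnion.2 ⟨j, Finset.mem_univ j, (hTmem f).1 hfT j⟩
    · intro w hw
      obtain ⟨i, hi1, hi2⟩ := hfg w hw
      exact ⟨f i, Finset.mem_image.2 ⟨i, Finset.mem_univ i, rfl⟩, hi1, hi2⟩
  have hinj : Set.InjOn (fun f : Fin r → V => Finset.image f Finset.univ) ↑Good := by
    intro f hf g hg heq
    have hfT : f ∈ T := Finset.mem_filter.1 (by exact_mod_cast hf) |>.1
    have hgT : g ∈ T := Finset.mem_filter.1 (by exact_mod_cast hg) |>.1
    funext i
    have h1 := hinter f hfT i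
    have h2 := hinter g hgT i
    simp only at heq
    rw [heq, h2] at h1
    exact (Finset.singleton_injective h1).symm
  have hcardle : Good.card ≤ target.card :=
    Finset.card_le_card_of_injOn _ hmapmem hinj
  -- final chain in ℝ
  have hsumR : (T.card : ℝ) ≤ (Good.card : ℝ) + ∑ w ∈ W, ((Bad w).card : ℝ) := by
    exact_mod_cast hsum
  have hsum2 : ∑ w ∈ W, ((Bad w).card : ℝ) ≤ ∑ w ∈ W, (1 - β w) ^ r * (m : ℝ) ^ r := by
    refine Finset.sum_le_sum fun w hw => ?_
    calc ((Bad w).card : ℝ) ≤ ((1 - β w) * m) ^ r := hBadcard w hw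
      _ = (1 - β w) ^ r * (m : ℝ) ^ r := mul_pow _ _ _
  have hTR : (T.card : ℝ) = (m : ℝ) ^ r := by exact_mod_cast hTcard
  calc (m : ℝ) ^ r * (1 - ∑ w ∈ W, (1 - β w) ^ r)
      = (m : ℝ) ^ r - ∑ w ∈ W, (1 - β w) ^ r * (m : ℝ) ^ r := by
        rw [mul_sub, mul_one, Finset.mul_sum]
        congr 1
        exact Finset.sum_congr rfl fun w _ => mul_comm _ _
    _ ≤ (Good.card : ℝ) := by linarith
    _ ≤ (target.card : ℝ) := by exact_mod_cast hcardle

end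
end
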